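/- Let k ≥ 3 be an odd integer, a = π/k, and let q : (0,π) → ℂ be any function, with W_{1,1} the associated function. Then for every x ∈ (0,a), q(x) = (−1)^{(k+1)/2} ( W_{1,1}(x) + ∑_{j=1}^{(k−1)/2} (−1)^j ( W_{1,1}(2ja + x) + W_{1,1}(2ja − x) ) ). -/
import Mathlib


/-- The function `W_{1,1}` associated with `q`, where `a = π/k`. -/
noncomputable def W11 (k : ℕ) (q : ℝ → ℂ) (t : ℝ) : ℂ :=
  let a := Real.pi / k
  if t ∈ Set.Ioo 0 a then
    -(q (((k : ℝ) - 1) * a + t) + q (((k : ℝ) - 1) * a - t)) / 2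
  else if t ∈ Set.Ioo a (((k : ℝ) - 1) * a) then
    -(q (((k : ℝ) + 1) * a - t) + q (((k : ℝ) - 1) * a - t)) / 2
  else if t ∈ Set.Ioo (((k : ℝ) - 1) * a) Real.pi then
    -(q (((k : ℝ) + 1) * a - t) + q (t - ((k : ℝ) - 1) * a)) / 2
  else 0

theorem q_from_W11 (k : ℕ) (hk : 3 ≤ k) (hodd : Odd k) (q : ℝ → ℂ) :
    ∀ x ∈ Set.Ioo (0:ℝ) (Real.pi / k),
      q x = (-1 : ℂ) ^ ((k + 1) / 2) *
        (W11 k q x + ∑ j ∈ Finset.Icc 1 ((k - 1) / 2), (-1 : ℂ) ^ j *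
          (W11 k q (2 * j * (Real.pi / k) + x) + W11 k q (2 * j * (Real.pi / k) - x))) := by
  obtain ⟨m, hm⟩ := hodd
  intro x hx
  set a := Real.pi / k with ha
  obtain ⟨hx0, hxa⟩ := hx
  have hm1 : 1 ≤ m := by omega
  obtain ⟨n, rfl⟩ : ∃ n, m = n + 1 := ⟨m - 1, by omega⟩
  have hk0 : (0:ℝ) < k := by positivity
  have hapos : 0 < a := div_pos Real.pi_pos hk0
  have hka : (k:ℝ) * a = Real.pi := by rw [ha]; field_simp
  have hkr : (k:ℝ) = 2*(n+1) + 1 := by rw [hm]; push_cast; ring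
  set g : ℕ → ℂ := fun j => (-1:ℂ)^j * (-(q (((k:ℝ)+1-2*j)*a + x) + q (((k:ℝ)+1-2*j)*a - x))/2) with hg
  -- first branch at x
  have hW0 : W11 k q x = -(q (((k:ℝ)-1)*a + x) + q (((k:ℝ)-1)*a - x))/2 := by
    rw [W11, if_pos ⟨hx0, hxa⟩]
  -- minus branch
  have hWm : ∀ j : ℕ, 1 ≤ j → j ≤ n + 1 →
      W11 k q (2*j*a - x) = -(q (((k:ℝ)+1-2*j)*a + x) + q (((k:ℝ)-1-2*j)*a + x))/2 := by
    intro j hj1 hjm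
    have hjr : (1:ℝ) ≤ j := by exact_mod_cast hj1
    have hjmr : (j:ℝ) ≤ n + 1 := by exact_mod_cast hjm
    have h1 : a < 2*j*a - x := by nlinarith
    have h2 : 2*j*a - x < ((k:ℝ)-1)*a := by rw [hkr]; nlinarith
    rw [W11, if_neg (by simp only [Set.mem_Ioo, not_and]; intro h; linarith),
      if_pos ⟨h1, h2⟩]
    have e1 : ((k:ℝ)+1)*a - (2*j*a - x) = ((k:ℝ)+1-2*j)*a + x := by ring
    have e2 : ((k:ℝ)-1)*a - (2*j*a - x) = ((k:ℝ)-1-2*j)*a + x := by ring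
    rw [e1, e2]
  -- plus branch, j < m
  have hWp : ∀ j : ℕ, 1 ≤ j → j < n + 1 →
      W11 k q (2*j*a + x) = -(q (((k:ℝ)+1-2*j)*a - x) + q (((k:ℝ)-1-2*j)*a - x))/2 := by
    intro j hj1 hjm
    have hjr : (1:ℝ) ≤ j := by exact_mod_cast hj1
    have hjmr : (j:ℝ) + 1 ≤ n + 1 := by exact_mod_cast hjm
    have h1 : a < 2*j*a + x := by nlinarith
    have h2 : 2*j*a + x < ((k:ℝ)-1)*a := by rw [hkr]; nlinarith
    rw [W11, if_neg (by simp only [Set.mem_Ioo, not_and]; intro h; linarith),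
      if_pos ⟨h1, h2⟩]
    have e1 : ((k:ℝ)+1)*a - (2*j*a + x) = ((k:ℝ)+1-2*j)*a - x := by ring
    have e2 : ((k:ℝ)-1)*a - (2*j*a + x) = ((k:ℝ)-1-2*j)*a - x := by ring
    rw [e1, e2]
  -- top plus branch, j = m
  have hWt : W11 k q (2*(n+1:ℕ)*a + x) = -(q (2*a - x) + q x)/2 := by
    have hnr : (0:ℝ) ≤ (n:ℝ) := Nat.cast_nonneg n
    have hc : (((n+1:ℕ)):ℝ) = (n:ℝ) + 1 := by push_cast; ring
    have h1 : ((k:ℝ)-1)*a < 2*(n+1:ℕ)*a + x := by rw [hkr, hc]; nlinarith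
    have h2 : 2*(n+1:ℕ)*a + x < Real.pi := by rw [← hka, hkr, hc]; nlinarith
    have h0 : ¬ (2*(n+1:ℕ)*a + x ∈ Set.Ioo 0 a) := by
      simp only [Set.mem_Ioo, not_and, hc]; intro h; nlinarith
    have h0' : ¬ (2*(n+1:ℕ)*a + x ∈ Set.Ioo a (((k:ℝ)-1)*a)) := by
      simp only [Set.mem_Ioo, not_and]; intro h; linarith
    rw [W11, if_neg h0, if_neg h0', if_pos ⟨h1, h2⟩]
    have e1 : ((k:ℝ)+1)*a - (2*(n+1:ℕ)*a + x) = 2*a - x := by rw [hkr, hc]; ring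
    have e2 : (2*(n+1:ℕ)*a + x) - ((k:ℝ)-1)*a = x := by rw [hkr, hc]; ring
    rw [e1, e2]
  -- telescoping step
  have hstep : ∀ j : ℕ, 1 ≤ j → j < n + 1 →
      (-1:ℂ)^j * (W11 k q (2*j*a + x) + W11 k q (2*j*a - x)) = g j - g (j+1) := by
    intro j hj1 hjm
    rw [hWp j hj1 hjm, hWm j hj1 (le_of_lt hjm)]
    simp only [hg]
    push_cast
    ring_nf
  -- partial sums
  have hsum : ∀ N : ℕ, N < n + 1 →
      ∑ j ∈ Finset.Icc 1 N, (-1:ℂ)^j * (W11 k q (2*j*a + x) + W11 k q (2*j*a - x))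
        = g 1 - g (N+1) := by
    intro N
    induction N with
    | zero => intro _; simp
    | succ N ih =>
      intro hN
      rw [Finset.sum_Icc_succ_top (by omega), ih (by omega), hstep (N+1) (by omega) hN]
      ring
  have hmm : (k-1)/2 = n + 1 := by omega
  have hk2 : (k+1)/2 = n + 2 := by omega
  rw [hmm, hk2, Finset.sum_Icc_succ_top (by omega : 1 ≤ n + 1),
    hsum n (by omega), hW0, hWt, hWm (n+1) (by omega) le_rfl]
  simp only [hg]
  have e1 : ((k:ℝ)+1-2*((n:ℝ)+1)) = 2 := by rw [hkr]; ring
  have e2 : ((k:ℝ)-1-2*((n:ℝ)+1)) = 0 := by rw [hkr]; ring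
  push_cast
  rw [e1, e2]
  have e3 : (2:ℝ)*a + x = 2*a + x := rfl
  have e4 : (0:ℝ)*a + x = x := by ring
  rw [e4]
  ring_nf
  rw [show ((-1:ℂ))^(n*2) = 1 by rw [pow_mul', neg_one_sq, one_pow], mul_one]
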